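/- arXiv:1807.02695 — 2 statements merged into one kernel-verified Lean document; each statement's English description precedes it below -/
import Mathlib

section
/- For every positive integer n, |γ_Zg(P_n) − n/2| ≤ 2, where P_n denotes the path graph on n vertices. -/
/- Formalization of the domination games from "The variety of domination games".

A game is specified by a legality predicate `legal : List V → V → Prop`, where the list
records the previously played vertices (most recent first).  Players alternate moves;
each move must be legal; the game ends when no legal move exists.  Dominator wants to
minimize, Staller to maximize, the total number of moves.

`canEnd legal k turn h` states that, with history `h` and the player to move given by
`turn` (`true` = Dominator), Dominator can guarantee that at most `k` further moves are
played (against any play of Staller).  The value of the game under optimal play by both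
players is then the least such `k` from the empty history. -/

/-- The closed neighborhood `N[v]` of a vertex. -/
def closedNbhd {V : Type*} (G : SimpleGraph V) (v : V) : Set V :=
  insert v (G.neighborSet v)

/-- `⋃_{u ∈ h} N[u]` : the set of vertices dominated by the moves in `h`. -/
def dominatedBy {V : Type*} (G : SimpleGraph V) (h : List V) : Set V :=
  ⋃ u ∈ h, closedNbhd G u

/-- `⋃_{u ∈ h} N(u)` : the set of vertices totally dominated by the moves in `h`. -/
def totDominatedBy {V : Type*} (G : SimpleGraph V) (h : List V) : Set V :=
  ⋃ u ∈ h, G.neighborSet u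

/-- Legality in the domination game: `N[v] \ ⋃_{j<i} N[v_j] ≠ ∅`. -/
def dgLegal {V : Type*} (G : SimpleGraph V) (h : List V) (v : V) : Prop :=
  (closedNbhd G v \ dominatedBy G h).Nonempty

/-- Legality in the total domination game: `N(v) \ ⋃_{j<i} N(v_j) ≠ ∅`. -/
def tgLegal {V : Type*} (G : SimpleGraph V) (h : List V) (v : V) : Prop :=
  (G.neighborSet v \ totDominatedBy G h).Nonempty

/-- Legality in the Z-domination game on `G|A`: `N(v) \ (A ∪ ⋃_{j<i} N[v_j]) ≠ ∅`. -/
def zLegal {V : Type*} (G : SimpleGraph V) (A : Set V) (h : List V) (v : V) : Prop :=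
  (G.neighborSet v \ (A ∪ dominatedBy G h)).Nonempty

/-- Legality in the LL-domination game on `G|A`: `N[v] \ (A ∪ ⋃_{j<i} N(v_j)) ≠ ∅`. -/
def llLegal {V : Type*} (G : SimpleGraph V) (A : Set V) (h : List V) (v : V) : Prop :=
  (closedNbhd G v \ (A ∪ totDominatedBy G h)).Nonempty

/-- Legality in the L-domination game on `G|A`: as in the LL-game, and moreover no vertex
may be played twice. -/
def lLegal {V : Type*} (G : SimpleGraph V) (A : Set V) (h : List V) (v : V) : Prop :=
  llLegal G A h v ∧ v ∉ h

/-- `canEnd legal k turn h` : with previously played vertices `h` and the player to move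
given by `turn` (`true` = Dominator, `false` = Staller), Dominator has a strategy
guaranteeing that at most `k` further moves are made. -/
def canEnd {V : Type*} (legal : List V → V → Prop) : ℕ → Bool → List V → Prop
  | 0, _, h => ∀ v, ¬ legal h v
  | k+1, true, h => (∀ v, ¬ legal h v) ∨ ∃ v, legal h v ∧ canEnd legal k false (v :: h)
  | k+1, false, h => ∀ v, legal h v → canEnd legal k true (v :: h)

/-- The number of moves in the game with legality predicate `legal` when both players play
optimally (Dominator minimizing, Staller maximizing the number of moves); `dFirst = true`
means Dominator makes the first move. -/
noncomputable def gameVal {V : Type*} (legal : List V → V → Prop) (dFirst : Bool) : ℕ :=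
  sInf {k | canEnd legal k dFirst []}

/-- The game Z-domination number `γ_Zg(G|A)` (Dominator starts). -/
noncomputable def gammaZgA {V : Type*} (G : SimpleGraph V) (A : Set V) : ℕ :=
  gameVal (zLegal G A) true

/-- The Staller-start game Z-domination number `γ'_Zg(G|A)`. -/
noncomputable def gammaZgA' {V : Type*} (G : SimpleGraph V) (A : Set V) : ℕ :=
  gameVal (zLegal G A) false

/-- The game L-domination number `γ_Lg(G|A)` (Dominator starts). -/
noncomputable def gammaLgA {V : Type*} (G : SimpleGraph V) (A : Set V) : ℕ :=
  gameVal (lLegal G A) true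

/-- The Staller-start game L-domination number `γ'_Lg(G|A)`. -/
noncomputable def gammaLgA' {V : Type*} (G : SimpleGraph V) (A : Set V) : ℕ :=
  gameVal (lLegal G A) false

/-- The game LL-domination number `γ_LLg(G|A)` (Dominator starts). -/
noncomputable def gammaLLgA {V : Type*} (G : SimpleGraph V) (A : Set V) : ℕ :=
  gameVal (llLegal G A) true

/-- The Staller-start game LL-domination number `γ'_LLg(G|A)`. -/
noncomputable def gammaLLgA' {V : Type*} (G : SimpleGraph V) (A : Set V) : ℕ :=
  gameVal (llLegal G A) false

/-- The game domination number `γ_g(G)` (Dominator starts). -/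
noncomputable def gammaG {V : Type*} (G : SimpleGraph V) : ℕ :=
  gameVal (dgLegal G) true

/-- The game total domination number `γ_tg(G)` (Dominator starts). -/
noncomputable def gammaTg {V : Type*} (G : SimpleGraph V) : ℕ :=
  gameVal (tgLegal G) true

/-- The game Z-domination number `γ_Zg(G)` (Dominator starts). -/
noncomputable def gammaZg {V : Type*} (G : SimpleGraph V) : ℕ := gammaZgA G ∅

/-- The Staller-start game Z-domination number `γ'_Zg(G)`. -/
noncomputable def gammaZg' {V : Type*} (G : SimpleGraph V) : ℕ := gammaZgA' G ∅

/-- The game L-domination number `γ_Lg(G)` (Dominator starts). -/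
noncomputable def gammaLg {V : Type*} (G : SimpleGraph V) : ℕ := gammaLgA G ∅

/-- The Staller-start game L-domination number `γ'_Lg(G)`. -/
noncomputable def gammaLg' {V : Type*} (G : SimpleGraph V) : ℕ := gammaLgA' G ∅

/-- The game LL-domination number `γ_LLg(G)` (Dominator starts). -/
noncomputable def gammaLLg {V : Type*} (G : SimpleGraph V) : ℕ := gammaLLgA G ∅

/-- The Staller-start game LL-domination number `γ'_LLg(G)`. -/
noncomputable def gammaLLg' {V : Type*} (G : SimpleGraph V) : ℕ := gammaLLgA' G ∅

/-- `G` has no isolated vertices. -/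
def isolateFree {V : Type*} (G : SimpleGraph V) : Prop := ∀ v : V, ∃ u, G.Adj v u

/-- The domination number `γ(G)`. -/
noncomputable def domNum {V : Type*} (G : SimpleGraph V) : ℕ :=
  sInf {k | ∃ S : Finset V, S.card = k ∧ ∀ v : V, ∃ u ∈ S, v ∈ closedNbhd G u}

/-- The total domination number `γ_t(G)`. -/
noncomputable def totDomNum {V : Type*} (G : SimpleGraph V) : ℕ :=
  sInf {k | ∃ S : Finset V, S.card = k ∧ ∀ v : V, ∃ u ∈ S, G.Adj u v}

/-! Lower bound: a move dominates at most three new vertices, and once something is dominated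
Staller can play a dominated vertex next to an undominated one; since every vertex of a path has
at most two neighbours, such a move dominates exactly one new vertex. Hence a round of two moves
dominates at most four vertices and `n ≤ 2 γ_Zg(P_n) + 1`.

Upper bound: Dominator watches the potential "number of undominated vertices plus number of
maximal runs of consecutive undominated vertices", which starts at `n + 1`. Every legal move
lowers it by at least one. While some run has two vertices, Dominator can lower it by three by
playing at the start of such a run; once all runs are single vertices, every move dominates
exactly one run and lowers it by two. So each round lowers it by four and
`γ_Zg(P_n) ≤ (n + 2) / 2`. -/

section Game

variable {V : Type*} (legal : List V → V → Prop)

theorem gameVal_le_of_canEnd {k : ℕ} {b : Bool} (hk : canEnd legal k b []) :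
    gameVal legal b ≤ k :=
  Nat.sInf_le hk

theorem canEnd_gameVal {k : ℕ} {b : Bool} (hk : canEnd legal k b []) :
    canEnd legal (gameVal legal b) b [] :=
  Nat.sInf_mem (s := {k | canEnd legal k b []}) ⟨k, hk⟩

theorem canEnd_of_potential_le (φ : List V → ℕ)
    (hpos : ∀ h v, legal h v → 0 < φ h)
    (hround : ∀ h, (∃ v, legal h v) →
      ∃ v, legal h v ∧ ∀ w, legal (v :: h) w → φ (w :: v :: h) + 4 ≤ φ h) :
    ∀ k h, φ h ≤ 2 * k → canEnd legal k true h := by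
  intro k
  induction k using Nat.twoStepInduction with
  | zero => exact fun h hφ v hv => by have := hpos h v hv; omega
  | one =>
    intro h hφ
    by_cases hlive : ∃ v, legal h v
    · obtain ⟨v, hv, hround⟩ := hround h hlive
      exact Or.inr ⟨v, hv, fun w hw => by have := hround w hw; omega⟩
    · exact Or.inl (not_exists.1 hlive)
  | more k ih _ =>
    intro h hφ
    by_cases hlive : ∃ v, legal h v
    · obtain ⟨v, hv, hround⟩ := hround h hlive
      exact Or.inr ⟨v, hv, fun w hw => ih _ (by have := hround w hw; omega)⟩
    · exact Or.inl (not_exists.1 hlive)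

theorem le_two_mul_add_one_of_canEnd (μ : List V → ℕ)
    (hlive : ∀ h, 0 < μ h → ∃ v, legal h v)
    (hmove : ∀ h v, legal h v → μ h ≤ μ (v :: h) + 3)
    (hreply : ∀ h v, legal h v → 0 < μ (v :: h) →
      ∃ w, legal (v :: h) w ∧ μ (v :: h) ≤ μ (w :: v :: h) + 1) :
    ∀ k h, canEnd legal k true h → μ h ≤ 2 * k + 1 := by
  have hdead : ∀ h, (∀ v, ¬ legal h v) → μ h = 0 := fun h hno => by
    by_contra hμ
    obtain ⟨v, hv⟩ := hlive h (Nat.pos_of_ne_zero hμ)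
    exact hno v hv
  intro k
  induction k using Nat.twoStepInduction with
  | zero => exact fun h hend => by simp [hdead h hend]
  | one =>
    rintro h (hno | ⟨v, hv, hend⟩)
    · simp [hdead h hno]
    · have := hmove h v hv
      have := hdead _ hend
      omega
  | more k ih _ =>
    rintro h (hno | ⟨v, hv, hend⟩)
    · simp [hdead h hno]
    have := hmove h v hv
    rcases Nat.eq_zero_or_pos (μ (v :: h)) with hzero | hpos
    · omega
    obtain ⟨w, hw, hwv⟩ := hreply h v hv hpos
    have := ih _ (hend w hw)
    omega

end Game

section Graph

variable {V : Type*} {G : SimpleGraph V}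

theorem mem_dominatedBy {h : List V} {u : V} :
    u ∈ dominatedBy G h ↔ ∃ p ∈ h, u ∈ closedNbhd G p := by
  simp [dominatedBy]

theorem dominatedBy_cons (v : V) (h : List V) :
    dominatedBy G (v :: h) = closedNbhd G v ∪ dominatedBy G h := by
  ext u
  simp [mem_dominatedBy]

theorem self_mem_dominatedBy_cons (v : V) (h : List V) : v ∈ dominatedBy G (v :: h) := by
  simp [dominatedBy_cons, closedNbhd]

theorem zLegal_empty_iff {h : List V} {v : V} :
    zLegal G ∅ h v ↔ ∃ u, G.Adj v u ∧ u ∉ dominatedBy G h := by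
  simp [zLegal, Set.Nonempty]

theorem ncard_compl_dominatedBy_cons [Finite V] (v : V) (h : List V) :
    (dominatedBy G (v :: h))ᶜ.ncard + (closedNbhd G v \ dominatedBy G h).ncard =
      (dominatedBy G h)ᶜ.ncard := by
  have hU : (dominatedBy G (v :: h))ᶜ = (dominatedBy G h)ᶜ \ closedNbhd G v := by
    rw [dominatedBy_cons, Set.compl_union, Set.sdiff_eq, Set.inter_comm]
  rw [hU, add_comm, Set.sdiff_eq_compl_inter (s := closedNbhd G v)]
  exact Set.ncard_inter_add_ncard_sdiff_eq_ncard (dominatedBy G h)ᶜ (closedNbhd G v)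

theorem closedNbhd_sdiff_dominatedBy_eq_singleton [Finite V] {h : List V} {x y : V}
    (hdeg : (G.neighborSet x).ncard ≤ 2) (hx : x ∈ dominatedBy G h) (hxy : G.Adj x y)
    (hy : y ∉ dominatedBy G h) :
    closedNbhd G x \ dominatedBy G h = {y} := by
  obtain ⟨p, hp, hxp⟩ := mem_dominatedBy.1 hx
  have hpD : closedNbhd G p ⊆ dominatedBy G h := fun u hu => mem_dominatedBy.2 ⟨p, hp, hu⟩
  have hpx : G.Adj x p := by
    rcases hxp with rfl | hpx
    · exact absurd (hpD (Or.inr hxy)) hy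
    · exact hpx.symm
  have hpy : p ≠ y := fun hpy => hy (hpD (hpy ▸ Or.inl rfl))
  have hN : G.neighborSet x = {p, y} :=
    (Set.eq_of_subset_of_ncard_le (Set.insert_subset hpx (Set.singleton_subset_iff.2 hxy))
      (by rw [Set.ncard_pair hpy]; exact hdeg)).symm
  ext u
  simp only [closedNbhd, hN, Set.mem_sdiff, Set.mem_insert_iff, Set.mem_singleton_iff]
  constructor
  · rintro ⟨rfl | rfl | rfl, hu⟩
    · exact absurd hx hu
    · exact absurd (hpD (Or.inl rfl)) hu
    · rfl
  · rintro rfl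
    exact ⟨Or.inr (Or.inr rfl), hy⟩

theorem exists_zLegal_closedNbhd_sdiff_eq_singleton [Finite V] (hconn : G.Preconnected)
    (hdeg : ∀ v, (G.neighborSet v).ncard ≤ 2) {h : List V} {u w : V}
    (hu : u ∈ dominatedBy G h) (hw : w ∉ dominatedBy G h) :
    ∃ x y, zLegal G ∅ h x ∧ closedNbhd G x \ dominatedBy G h = {y} := by
  obtain ⟨d, -, hx, hy⟩ := (hconn u w).some.exists_boundary_dart _ hu hw
  exact ⟨d.fst, d.snd, zLegal_empty_iff.2 ⟨d.snd, d.adj, hy⟩,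
    closedNbhd_sdiff_dominatedBy_eq_singleton (hdeg _) hx d.adj hy⟩

theorem card_le_two_mul_add_one_of_canEnd_zLegal [Finite V] (hconn : G.Preconnected)
    (hiso : isolateFree G) (hdeg : ∀ v, (G.neighborSet v).ncard ≤ 2) {k : ℕ}
    (hk : canEnd (zLegal G ∅) k true []) :
    Nat.card V ≤ 2 * k + 1 := by
  have hnil : (dominatedBy G [])ᶜ.ncard = Nat.card V := by simp [dominatedBy]
  refine hnil ▸ le_two_mul_add_one_of_canEnd _ (fun h => (dominatedBy G h)ᶜ.ncard)
    (fun h hpos => ?_) (fun h v _ => ?_) (fun h v _ hpos => ?_) k [] hk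
  · obtain ⟨u, hu⟩ := Set.nonempty_of_ncard_ne_zero hpos.ne'
    obtain ⟨v, huv⟩ := hiso u
    exact ⟨v, zLegal_empty_iff.2 ⟨u, huv.symm, hu⟩⟩
  · have := hdeg v
    have : (closedNbhd G v).ncard ≤ (G.neighborSet v).ncard + 1 := Set.ncard_insert_le _ _
    have := ncard_compl_dominatedBy_cons (G := G) v h
    have := Set.ncard_le_ncard (Set.sdiff_subset (s := closedNbhd G v) (t := dominatedBy G h))
    omega
  · obtain ⟨w, hw⟩ := Set.nonempty_of_ncard_ne_zero hpos.ne'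
    obtain ⟨x, y, hx, hxy⟩ := exists_zLegal_closedNbhd_sdiff_eq_singleton hconn hdeg
      (self_mem_dominatedBy_cons v h) hw
    refine ⟨x, hx, ?_⟩
    have := ncard_compl_dominatedBy_cons (G := G) x (v :: h)
    rw [hxy, Set.ncard_singleton] at this
    omega

end Graph

section Path

open SimpleGraph

variable {n : ℕ}

local notation "D" => dominatedBy (pathGraph n)
local notation "N[" v "]" => closedNbhd (pathGraph n) v

theorem mem_closedNbhd_pathGraph {v j : Fin n} :
    j ∈ N[v] ↔ (j : ℕ) ≤ v + 1 ∧ (v : ℕ) ≤ j + 1 := by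
  simp only [closedNbhd, Set.mem_insert_iff, mem_neighborSet, pathGraph_adj, Fin.ext_iff]
  omega

theorem ncard_neighborSet_pathGraph_le (v : Fin n) :
    ((pathGraph n).neighborSet v).ncard ≤ 2 := by
  calc ((pathGraph n).neighborSet v).ncard ≤ ({(v : ℕ) - 1, (v : ℕ) + 1} : Set ℕ).ncard :=
        Set.ncard_le_ncard_of_injOn Fin.val
          (fun j hj => by simp only [mem_neighborSet, pathGraph_adj] at hj; simp; omega)
          Fin.val_injective.injOn
    _ ≤ 2 := (Set.ncard_insert_le _ _).trans (by simp)

theorem isolateFree_pathGraph (hn : n ≠ 1) : isolateFree (pathGraph n) := fun v => by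
  by_cases hv : (v : ℕ) + 1 < n
  · exact ⟨⟨v + 1, hv⟩, pathGraph_adj.2 (Or.inl rfl)⟩
  · exact ⟨⟨v - 1, by omega⟩, pathGraph_adj.2 (Or.inr (by simp; omega))⟩

theorem le_two_mul_add_one_of_canEnd_pathGraph {k : ℕ}
    (hk : canEnd (zLegal (pathGraph n) ∅) k true []) : n ≤ 2 * k + 1 := by
  rcases eq_or_ne n 1 with rfl | hn
  · omega
  simpa using card_le_two_mul_add_one_of_canEnd_zLegal (pathGraph_preconnected n)
    (isolateFree_pathGraph hn) ncard_neighborSet_pathGraph_le hk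

def runStarts (h : List (Fin n)) : Set (Fin n) :=
  {j | j ∉ D h ∧ ∀ i : Fin n, (i : ℕ) + 1 = j → i ∈ D h}

noncomputable def runPotential (h : List (Fin n)) : ℕ :=
  (D h)ᶜ.ncard + (runStarts h).ncard

theorem runStarts_sdiff_closedNbhd_subset (v : Fin n) (h : List (Fin n)) :
    runStarts h \ N[v] ⊆ runStarts (v :: h) := by
  rintro j ⟨⟨hj, hprev⟩, hjv⟩
  simp only [runStarts, dominatedBy_cons, Set.mem_ofPred_eq, Set.mem_union]
  exact ⟨by tauto, fun i hi => Or.inr (hprev i hi)⟩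

theorem runStarts_cons_sdiff {v j : Fin n} {h : List (Fin n)}
    (hj : j ∈ runStarts (v :: h) \ runStarts h) :
    (j : ℕ) = v + 2 ∧ ∃ i : Fin n, (i : ℕ) = v + 1 ∧ i ∉ D h := by
  obtain ⟨⟨hj, hprev⟩, hjold⟩ := hj
  simp only [runStarts, dominatedBy_cons, Set.mem_ofPred_eq, Set.mem_union, not_or,
    not_and, not_forall] at hj hprev hjold
  obtain ⟨i, hij, hi⟩ := hjold hj.2
  have hiv := (hprev i hij).resolve_right hi
  have hjv := hj.1
  rw [mem_closedNbhd_pathGraph] at hiv hjv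
  exact ⟨by omega, i, by omega, hi⟩

theorem ncard_runStarts_cons_sdiff_le_one (v : Fin n) (h : List (Fin n)) :
    (runStarts (v :: h) \ runStarts h).ncard ≤ 1 :=
  (Set.ncard_le_one (Set.toFinite _)).2 fun _ ha _ hb =>
    Fin.ext ((runStarts_cons_sdiff ha).1.trans (runStarts_cons_sdiff hb).1.symm)

theorem runPotential_cons_add (v : Fin n) (h : List (Fin n)) :
    runPotential (v :: h) + (N[v] \ D h).ncard + (runStarts h ∩ N[v]).ncard =
      runPotential h + (runStarts (v :: h) \ runStarts h).ncard := by
  have hold : runStarts (v :: h) ∩ runStarts h = runStarts h \ N[v] := by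
    refine subset_antisymm (fun j ⟨hnew, hj⟩ => ⟨hj, fun hjv => hnew.1 ?_⟩)
      (fun j hj => ⟨runStarts_sdiff_closedNbhd_subset v h hj, hj.1⟩)
    rw [dominatedBy_cons]
    exact Or.inl hjv
  have := ncard_compl_dominatedBy_cons (G := pathGraph n) v h
  have := Set.ncard_inter_add_ncard_sdiff_eq_ncard (runStarts (v :: h)) (runStarts h)
  have := Set.ncard_inter_add_ncard_sdiff_eq_ncard (runStarts h) N[v]
  rw [hold] at *
  unfold runPotential
  omega

theorem runPotential_cons_lt {v : Fin n} {h : List (Fin n)} (hv : zLegal (pathGraph n) ∅ h v) :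
    runPotential (v :: h) < runPotential h := by
  have key := runPotential_cons_add v h
  obtain ⟨u, hvu, hu⟩ := zLegal_empty_iff.1 hv
  have hX : 0 < (N[v] \ D h).ncard := (Set.ncard_pos (Set.toFinite _)).2 ⟨u, Or.inr hvu, hu⟩
  rcases (runStarts (v :: h) \ runStarts h).eq_empty_or_nonempty with hnew | ⟨j, hj⟩
  · rw [hnew, Set.ncard_empty] at key
    omega
  have := ncard_runStarts_cons_sdiff_le_one v h
  obtain ⟨-, i, hi, hiD⟩ := runStarts_cons_sdiff hj
  have hiv : i ∈ N[v] := mem_closedNbhd_pathGraph.2 (by omega)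
  by_cases hvD : v ∈ D h
  · have hstart : i ∈ runStarts h :=
      ⟨hiD, fun i' hi' => Fin.ext (by omega : (i' : ℕ) = v) ▸ hvD⟩
    have : 0 < (runStarts h ∩ N[v]).ncard :=
      (Set.ncard_pos (Set.toFinite _)).2 ⟨i, hstart, hiv⟩
    omega
  · have : 1 < (N[v] \ D h).ncard := (Set.one_lt_ncard_iff (Set.toFinite _)).2
      ⟨v, i, ⟨Or.inl rfl, hvD⟩, ⟨hiv, hiD⟩, fun hvi => by rw [← hvi] at hi; omega⟩
    omega

theorem exists_runStart_of_adj {h : List (Fin n)} {a b : Fin n} (hab : (b : ℕ) = a + 1)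
    (ha : a ∉ D h) (hb : b ∉ D h) :
    ∃ a b : Fin n, (b : ℕ) = a + 1 ∧ a ∈ runStarts h ∧ b ∉ D h := by
  obtain ⟨m, hm⟩ : ∃ m, (a : ℕ) = m := ⟨_, rfl⟩
  induction m generalizing a b with
  | zero => exact ⟨a, b, hab, ⟨ha, fun i hi => by omega⟩, hb⟩
  | succ m ih =>
    by_cases hstart : a ∈ runStarts h
    · exact ⟨a, b, hab, hstart, hb⟩
    simp only [runStarts, Set.mem_ofPred_eq, not_and, not_forall] at hstart
    obtain ⟨i, hia, hi⟩ := hstart ha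
    exact ih hia.symm hi ha (by omega)

theorem exists_zLegal_runPotential_cons_add_three_le {h : List (Fin n)}
    (hcover : ¬ (pathGraph n).IsVertexCover (D h)) :
    ∃ v, zLegal (pathGraph n) ∅ h v ∧ runPotential (v :: h) + 3 ≤ runPotential h := by
  simp only [IsVertexCover, not_forall, not_or] at hcover
  obtain ⟨x, y, hxy, hx, hy⟩ := hcover
  obtain ⟨a, b, hab, ha, hb⟩ :
      ∃ a b : Fin n, (b : ℕ) = a + 1 ∧ a ∈ runStarts h ∧ b ∉ D h := by
    rcases pathGraph_adj.1 hxy with hxy | hxy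
    · exact exists_runStart_of_adj hxy.symm hx hy
    · exact exists_runStart_of_adj hxy.symm hy hx
  have hbN : ∀ {v : Fin n}, (v : ℕ) ≤ b + 1 ∧ (b : ℕ) ≤ v + 1 → v ∈ N[b] :=
    mem_closedNbhd_pathGraph.2
  by_cases hc : ∃ c : Fin n, (c : ℕ) = b + 1 ∧ c ∉ D h
  · -- the run starting at `a` has length at least three: play its second vertex
    obtain ⟨c, hbc, hc⟩ := hc
    refine ⟨b, zLegal_empty_iff.2 ⟨a, pathGraph_adj.2 (Or.inr hab.symm), ha.1⟩, ?_⟩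
    have key := runPotential_cons_add b h
    have := ncard_runStarts_cons_sdiff_le_one b h
    have : 2 < (N[b] \ D h).ncard := (Set.two_lt_ncard_iff (Set.toFinite _)).2
      ⟨a, b, c, ⟨hbN (by omega), ha.1⟩, ⟨hbN (by omega), hb⟩, ⟨hbN (by omega), hc⟩,
        Fin.ne_of_val_ne (by omega), Fin.ne_of_val_ne (by omega), Fin.ne_of_val_ne (by omega)⟩
    have : 0 < (runStarts h ∩ N[b]).ncard :=
      (Set.ncard_pos (Set.toFinite _)).2 ⟨a, ha, hbN (by omega)⟩
    omega
  · -- the run starting at `a` is `{a, b}`: play `a`, which creates no new run start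
    refine ⟨a, zLegal_empty_iff.2 ⟨b, pathGraph_adj.2 (Or.inl hab.symm), hb⟩, ?_⟩
    have key := runPotential_cons_add a h
    have haN : ∀ {v : Fin n}, (v : ℕ) ≤ a + 1 ∧ (a : ℕ) ≤ v + 1 → v ∈ N[a] :=
      mem_closedNbhd_pathGraph.2
    have hnew : runStarts (a :: h) \ runStarts h = ∅ := by
      refine Set.eq_empty_of_forall_notMem fun j hj => hc ⟨j, ?_, ?_⟩
      · have := (runStarts_cons_sdiff hj).1
        omega
      · have := hj.1.1
        rw [dominatedBy_cons] at this
        exact fun hjD => this (Or.inr hjD)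
    have : 1 < (N[a] \ D h).ncard := (Set.one_lt_ncard_iff (Set.toFinite _)).2
      ⟨a, b, ⟨haN (by omega), ha.1⟩, ⟨haN (by omega), hb⟩, Fin.ne_of_val_ne (by omega)⟩
    have : 0 < (runStarts h ∩ N[a]).ncard :=
      (Set.ncard_pos (Set.toFinite _)).2 ⟨a, ha, haN (by omega)⟩
    rw [hnew, Set.ncard_empty] at key
    omega

theorem runPotential_cons_add_two_le {v : Fin n} {h : List (Fin n)}
    (hcover : (pathGraph n).IsVertexCover (D h)) (hv : zLegal (pathGraph n) ∅ h v) :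
    runPotential (v :: h) + 2 ≤ runPotential h := by
  have key := runPotential_cons_add v h
  obtain ⟨u, hvu, hu⟩ := zLegal_empty_iff.1 hv
  have hvD : v ∈ D h := (hcover hvu).resolve_right hu
  have hX :=
    closedNbhd_sdiff_dominatedBy_eq_singleton (ncard_neighborSet_pathGraph_le v) hvD hvu hu
  have hstart : u ∈ runStarts h :=
    ⟨hu, fun i hi => (hcover (pathGraph_adj.2 (Or.inl hi))).resolve_right hu⟩
  have : 0 < (runStarts h ∩ N[v]).ncard :=
    (Set.ncard_pos (Set.toFinite _)).2 ⟨u, hstart, Or.inr hvu⟩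
  have hnew : runStarts (v :: h) \ runStarts h = ∅ := by
    refine Set.eq_empty_of_forall_notMem fun j hj => ?_
    obtain ⟨hj2, i, hi1, hiD⟩ := runStarts_cons_sdiff hj
    have hjD : j ∉ D h := fun hjD => hj.1.1 (by rw [dominatedBy_cons]; exact Or.inr hjD)
    exact (hcover (pathGraph_adj.2 (Or.inl (by omega)))).elim hiD hjD
  rw [hX, hnew, Set.ncard_singleton, Set.ncard_empty] at key
  omega

theorem canEnd_pathGraph_of_runPotential_le : ∀ k (h : List (Fin n)),
    runPotential h ≤ 2 * k → canEnd (zLegal (pathGraph n) ∅) k true h :=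
  canEnd_of_potential_le _ runPotential (fun _ _ hv => Nat.zero_lt_of_lt (runPotential_cons_lt hv))
    fun h ⟨v₀, hv₀⟩ => by
      by_cases hcover : (pathGraph n).IsVertexCover (D h)
      · refine ⟨v₀, hv₀, fun w hw => ?_⟩
        have := runPotential_cons_add_two_le hcover hv₀
        have := runPotential_cons_add_two_le
          (hcover.subset (dominatedBy_cons v₀ h ▸ Set.subset_union_right)) hw
        omega
      · obtain ⟨v, hv, hdrop⟩ := exists_zLegal_runPotential_cons_add_three_le hcover
        exact ⟨v, hv, fun w hw => by have := runPotential_cons_lt hw; omega⟩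

theorem runPotential_nil_le : runPotential ([] : List (Fin n)) ≤ n + 1 := by
  have hstarts : (runStarts ([] : List (Fin n))).ncard ≤ 1 :=
    (Set.ncard_le_one (Set.toFinite _)).2 fun a ha b hb => by
      have ha0 : (a : ℕ) = 0 := by_contra fun h0 => by
        simpa [dominatedBy] using ha.2 ⟨a - 1, by omega⟩ (by simp; omega)
      have hb0 : (b : ℕ) = 0 := by_contra fun h0 => by
        simpa [dominatedBy] using hb.2 ⟨b - 1, by omega⟩ (by simp; omega)
      exact Fin.ext (ha0.trans hb0.symm)
  have : (D ([] : List (Fin n)))ᶜ.ncard = n := by simp [dominatedBy]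
  unfold runPotential
  omega

end Path

theorem gammaZg_path_general (n : ℕ) :
    |(gammaZg (SimpleGraph.pathGraph n) : ℝ) - n / 2| ≤ 2 := by
  have hend : canEnd (zLegal (SimpleGraph.pathGraph n) ∅) ((n + 2) / 2) true [] :=
    canEnd_pathGraph_of_runPotential_le _ _ (runPotential_nil_le.trans (by omega))
  have hupper : gammaZg (SimpleGraph.pathGraph n) ≤ (n + 2) / 2 := gameVal_le_of_canEnd _ hend
  have hlower : n ≤ 2 * gammaZg (SimpleGraph.pathGraph n) + 1 :=
    le_two_mul_add_one_of_canEnd_pathGraph (canEnd_gameVal _ hend)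
  have h₁ : (n : ℝ) ≤ 2 * gammaZg (SimpleGraph.pathGraph n) + 1 := by exact_mod_cast hlower
  have h₂ : (2 * gammaZg (SimpleGraph.pathGraph n) : ℝ) ≤ n + 2 := by
    exact_mod_cast (by omega)
  rw [abs_le]
  constructor <;> linarith

/-- `γ_Zg(P_n) = n/2 + c_n` with `|c_n| ≤ 2`. -/
theorem gammaZg_path (n : ℕ) (hn : 0 < n) :
    |(gammaZg (SimpleGraph.pathGraph n) : ℝ) - n / 2| ≤ 2 :=
  gammaZg_path_general n
end

section
/- If G is a connected finite simple graph with n(G) ≥ 2 vertices and k is an integer with k ≥ 2n(G), then γ_Zg(G □ K_{1,k}) = γ_LLg(G □ K_{1,k}) = 2n(G) − 1, where G □ K_{1,k} is the Cartesian product of G with the star K_{1,k}. -/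
private lemma canEnd_of_noLegal {V : Type*} (legal : List V → V → Prop) :
    ∀ (m : ℕ) (turn : Bool) (h : List V), (∀ v, ¬ legal h v) → canEnd legal m turn h
  | 0, true, _, hno => hno
  | 0, false, _, hno => hno
  | _+1, true, _, hno => Or.inl hno
  | _+1, false, _, hno => fun v hv => absurd hv (hno v)

private lemma canEnd_zero_iff {V : Type*} (legal : List V → V → Prop) (turn : Bool)
    (h : List V) : canEnd legal 0 turn h ↔ ∀ v, ¬ legal h v := by
  cases turn <;> rfl

private lemma sdiff_toFinset_cons {V : Type*} [DecidableEq V] (C : Finset V) (v : V)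
    (h : List V) : C \ (v :: h).toFinset = (C \ h.toFinset).erase v := by
  ext x
  simp only [List.toFinset_cons, Finset.mem_sdiff, Finset.mem_insert, Finset.mem_erase]
  tauto

private lemma abstract_up {V : Type*} [DecidableEq V] (legal : List V → V → Prop)
    (C : Finset V) (k : ℕ)
    (P1 : ∀ h : List V, (∀ c ∈ C, c ∈ h) → ∀ v, ¬ legal h v)
    (P2 : ∀ (h : List V) (c : V), h.length < k → c ∈ C → c ∉ h → legal h c) :
    ∀ (m : ℕ) (turn : Bool) (h : List V), h.length + m ≤ k →
      2 * (C \ h.toFinset).card ≤ m + (if turn then 1 else 0) →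
      canEnd legal m turn h := by
  intro m
  induction m with
  | zero =>
    intro turn h hlen hcard
    have h1 : 2 * (C \ h.toFinset).card ≤ 1 :=
      le_trans hcard (by cases turn <;> simp)
    have hr : C \ h.toFinset = ∅ := Finset.card_eq_zero.1 (by omega)
    have hsub : ∀ c ∈ C, c ∈ h := by
      intro c hcmem
      have := Finset.sdiff_eq_empty_iff_subset.1 hr hcmem
      exact List.mem_toFinset.1 this
    exact (canEnd_zero_iff legal turn h).2 (P1 h hsub)
  | succ m ih =>
    intro turn h hlen hcard
    cases turn with
    | true =>
      by_cases hr : C \ h.toFinset = ∅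
      · exact Or.inl (P1 h (fun c hcmem =>
          List.mem_toFinset.1 (Finset.sdiff_eq_empty_iff_subset.1 hr hcmem)))
      · obtain ⟨c, hc⟩ := Finset.nonempty_iff_ne_empty.2 hr
        have hcC : c ∈ C := (Finset.mem_sdiff.1 hc).1
        have hch : c ∉ h := fun hm => (Finset.mem_sdiff.1 hc).2 (List.mem_toFinset.2 hm)
        refine Or.inr ⟨c, P2 h c (by omega) hcC hch, ih false (c :: h) (by simp; omega) ?_⟩
        have hcardc : (C \ (c :: h).toFinset).card = (C \ h.toFinset).card - 1 := by
          rw [sdiff_toFinset_cons, Finset.card_erase_of_mem hc]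
        have hpos : 0 < (C \ h.toFinset).card := Finset.card_pos.2 ⟨c, hc⟩
        simp only [if_true] at hcard
        simp only [if_neg (by simp : ¬ (false = true))]
        omega
    | false =>
      intro v hv
      apply ih true (v :: h) (by simp; omega)
      have hle : (C \ (v :: h).toFinset).card ≤ (C \ h.toFinset).card := by
        rw [sdiff_toFinset_cons]; exact Finset.card_le_card (Finset.erase_subset _ _)
      simp only [if_neg (by simp : ¬ (false = true))] at hcard
      simp only [if_true]
      omega

private lemma abstract_low {V : Type*} [DecidableEq V] (legal : List V → V → Prop)
    (C : Finset V) (k : ℕ)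
    (P2 : ∀ (h : List V) (c : V), h.length < k → c ∈ C → c ∉ h → legal h c)
    (P3 : ∀ h : List V, h.length < k → (∃ c ∈ C, c ∉ h) → ∃ v, v ∉ C ∧ legal h v) :
    ∀ (m : ℕ) (turn : Bool) (h : List V), h.length + m < k →
      canEnd legal m turn h →
      2 * (C \ h.toFinset).card ≤ m + (if turn then 1 else 0) := by
  have hempty : ∀ (h : List V), h.length < k → (∀ v, ¬ legal h v) → C \ h.toFinset = ∅ := by
    intro h hlen hno
    by_contra hne
    obtain ⟨c, hc⟩ := Finset.nonempty_iff_ne_empty.2 hne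
    exact hno c (P2 h c hlen (Finset.mem_sdiff.1 hc).1
      (fun hm => (Finset.mem_sdiff.1 hc).2 (List.mem_toFinset.2 hm)))
  intro m
  induction m with
  | zero =>
    intro turn h hlen hce
    rw [canEnd_zero_iff] at hce
    rw [hempty h (by omega) hce]
    simp
  | succ m ih =>
    intro turn h hlen hce
    cases turn with
    | true =>
      rcases hce with hno | ⟨v, hv, hnext⟩
      · rw [hempty h (by omega) hno]; simp
      · have := ih false (v :: h) (by simp; omega) hnext
        have hge : (C \ h.toFinset).card ≤ (C \ (v :: h).toFinset).card + 1 := by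
          rw [sdiff_toFinset_cons]
          have := Finset.card_erase_le (s := C \ h.toFinset) (a := v)
          have := Finset.pred_card_le_card_erase (s := C \ h.toFinset) (a := v)
          omega
        simp only [if_neg (by simp : ¬ (false = true))] at this
        simp only [if_true]
        omega
    | false =>
      by_cases hr : C \ h.toFinset = ∅
      · rw [hr]; simp
      · obtain ⟨c, hc⟩ := Finset.nonempty_iff_ne_empty.2 hr
        obtain ⟨v, hvC, hvlegal⟩ := P3 h (by omega)
          ⟨c, (Finset.mem_sdiff.1 hc).1,
            fun hm => (Finset.mem_sdiff.1 hc).2 (List.mem_toFinset.2 hm)⟩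
        have hnext := hce v hvlegal
        have := ih true (v :: h) (by simp; omega) hnext
        have hsame : C \ (v :: h).toFinset = C \ h.toFinset := by
          rw [sdiff_toFinset_cons, Finset.erase_eq_of_notMem]
          intro hm
          exact hvC (Finset.mem_sdiff.1 hm).1
        rw [hsame] at this
        simp only [if_true] at this
        simp only [if_neg (by simp : ¬ (false = true))]
        omega

private lemma exists_fresh {V : Type*} {k : ℕ} (hk : 0 < k) (h : List (V × (Fin 1 ⊕ Fin k)))
    (hlen : h.length < k) : ∃ i : Fin k, ∀ u ∈ h, u.2 ≠ Sum.inr i := by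
  classical
  set f : (V × (Fin 1 ⊕ Fin k)) → Fin k := fun u => Sum.elim (fun _ => ⟨0, hk⟩) id u.2 with hf
  set used : Finset (Fin k) :=
    Finset.univ.filter (fun i : Fin k => ∃ u ∈ h, u.2 = Sum.inr i) with hused
  have hsub : used ⊆ h.toFinset.image f := by
    intro i hi
    simp only [hused, Finset.mem_filter] at hi
    obtain ⟨u, hu, hui⟩ := hi.2
    exact Finset.mem_image.2 ⟨u, List.mem_toFinset.2 hu, by simp [hf, hui]⟩
  have hcard : used.card < k := by
    calc used.card ≤ (h.toFinset.image f).card := Finset.card_le_card hsub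
      _ ≤ h.toFinset.card := Finset.card_image_le
      _ ≤ h.length := h.toFinset_card_le
      _ < k := hlen
  have : used ≠ Finset.univ := by
    intro heq
    rw [heq, Finset.card_univ, Fintype.card_fin] at hcard
    omega
  obtain ⟨i, hi⟩ : ∃ i : Fin k, i ∉ used := by
    by_contra hcon
    push_neg at hcon
    exact this (Finset.eq_univ_iff_forall.2 hcon)
  refine ⟨i, fun u hu hui => hi ?_⟩
  simp only [hused, Finset.mem_filter, Finset.mem_univ, true_and]
  exact ⟨u, hu, hui⟩

private lemma adj_leaf_aux {V : Type*} {k : ℕ} (G : SimpleGraph V)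
    {u : V × (Fin 1 ⊕ Fin k)} {g : V} {i : Fin k}
    (hadj : (G.boxProd (completeBipartiteGraph (Fin 1) (Fin k))).Adj u (g, Sum.inr i)) :
    u.2 = Sum.inr i ∨ u = (g, Sum.inl 0) := by
  obtain ⟨u1, u2⟩ := u
  rw [SimpleGraph.boxProd_adj] at hadj
  rcases hadj with ⟨_, h2⟩ | ⟨h2, rfl⟩
  · exact Or.inl h2
  · rcases u2 with j | j
    · exact Or.inr (by rw [Subsingleton.elim j 0])
    · simp at h2

private lemma notMem_dominatedBy_fresh {V : Type*} {k : ℕ} (G : SimpleGraph V)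
    (h : List (V × (Fin 1 ⊕ Fin k))) (g : V) (i : Fin k)
    (hfresh : ∀ u ∈ h, u.2 ≠ Sum.inr i)
    (hg : ((g, Sum.inl 0) : V × (Fin 1 ⊕ Fin k)) ∉ h) :
    ((g, Sum.inr i) : V × (Fin 1 ⊕ Fin k)) ∉
      dominatedBy (G.boxProd (completeBipartiteGraph (Fin 1) (Fin k))) h := by
  intro hmem
  simp only [dominatedBy, Set.mem_iUnion] at hmem
  obtain ⟨u, hu, hcu⟩ := hmem
  rcases Set.mem_insert_iff.1 hcu with heq | hadj
  · exact hfresh u hu (by rw [← heq])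
  · rcases adj_leaf_aux G hadj with h2 | h2
    · exact hfresh u hu h2
    · exact hg (h2 ▸ hu)

private lemma notMem_totDominatedBy_fresh {V : Type*} {k : ℕ} (G : SimpleGraph V)
    (h : List (V × (Fin 1 ⊕ Fin k))) (g : V) (i : Fin k)
    (hfresh : ∀ u ∈ h, u.2 ≠ Sum.inr i)
    (hg : ((g, Sum.inl 0) : V × (Fin 1 ⊕ Fin k)) ∉ h) :
    ((g, Sum.inr i) : V × (Fin 1 ⊕ Fin k)) ∉
      totDominatedBy (G.boxProd (completeBipartiteGraph (Fin 1) (Fin k))) h := by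
  intro hmem
  simp only [totDominatedBy, Set.mem_iUnion] at hmem
  obtain ⟨u, hu, hadj⟩ := hmem
  rcases adj_leaf_aux G hadj with h2 | h2
  · exact hfresh u hu h2
  · exact hg (h2 ▸ hu)

private lemma center_adj_leaf {V : Type*} {k : ℕ} (G : SimpleGraph V) (g : V) (i : Fin k) :
    (G.boxProd (completeBipartiteGraph (Fin 1) (Fin k))).Adj (g, Sum.inl 0) (g, Sum.inr i) := by
  rw [SimpleGraph.boxProd_adj]
  exact Or.inr ⟨Or.inl (by simp), rfl⟩

private lemma center_adj_center {V : Type*} {k : ℕ} (G : SimpleGraph V) {g g' : V}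
    (hgg : G.Adj g g') :
    (G.boxProd (completeBipartiteGraph (Fin 1) (Fin k))).Adj (g, Sum.inl 0) (g', Sum.inl 0) := by
  rw [SimpleGraph.boxProd_adj]
  exact Or.inl ⟨hgg, rfl⟩

private lemma exists_adj_of_connected {V : Type*} [Fintype V] (G : SimpleGraph V)
    (hc : G.Connected) (h2 : 2 ≤ Fintype.card V) (g : V) : ∃ g', G.Adj g g' := by
  obtain ⟨g', hne⟩ := Fintype.exists_ne_of_one_lt_card (by omega) g
  obtain ⟨p⟩ := hc g g'
  cases p with
  | nil => exact absurd rfl hne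
  | cons hadj _ => exact ⟨_, hadj⟩

/-- For a connected graph `G` on at least two vertices and `k ≥ 2n(G)`,
`γ_Zg(G □ K_{1,k}) = γ_LLg(G □ K_{1,k}) = 2n(G) − 1`. -/
theorem gammaZg_eq_gammaLLg_boxProd_star {V : Type*} [Fintype V] (G : SimpleGraph V)
    (hc : G.Connected) (h2 : 2 ≤ Fintype.card V) (k : ℕ) (hk : 2 * Fintype.card V ≤ k) :
    gammaZg (G.boxProd (completeBipartiteGraph (Fin 1) (Fin k))) = 2 * Fintype.card V - 1 ∧
    gammaLLg (G.boxProd (completeBipartiteGraph (Fin 1) (Fin k))) = 2 * Fintype.card V - 1 := by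
  classical
  set H := G.boxProd (completeBipartiteGraph (Fin 1) (Fin k)) with hH
  set n := Fintype.card V with hn
  set C : Finset (V × (Fin 1 ⊕ Fin k)) :=
    Finset.univ.image (fun g => (g, Sum.inl 0)) with hCdef
  have hmemC : ∀ w : V × (Fin 1 ⊕ Fin k), w ∈ C ↔ w.2 = Sum.inl 0 := by
    intro w
    simp only [hCdef, Finset.mem_image, Finset.mem_univ, true_and]
    constructor
    · rintro ⟨g, rfl⟩; rfl
    · intro hw; exact ⟨w.1, Prod.ext rfl hw.symm⟩
  have hCcard : C.card = n := by
    rw [hCdef, Finset.card_image_of_injective _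
      (fun a b hab => congrArg Prod.fst hab), Finset.card_univ]
  have hk0 : 0 < k := by omega
  have hDall : ∀ h : List (V × (Fin 1 ⊕ Fin k)), (∀ c ∈ C, c ∈ h) →
      ∀ w, w ∈ dominatedBy H h := by
    intro h hall w
    obtain ⟨g, b⟩ := w
    have hcg : ((g, Sum.inl 0) : V × (Fin 1 ⊕ Fin k)) ∈ h :=
      hall _ ((hmemC _).2 rfl)
    simp only [dominatedBy, Set.mem_iUnion]
    refine ⟨(g, Sum.inl 0), hcg, ?_⟩
    rcases b with j | i
    · rw [Subsingleton.elim j 0]; exact Set.mem_insert _ _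
    · exact Set.mem_insert_iff.2 (Or.inr (center_adj_leaf G g i))
  have hTall : ∀ h : List (V × (Fin 1 ⊕ Fin k)), (∀ c ∈ C, c ∈ h) →
      ∀ w, w ∈ totDominatedBy H h := by
    intro h hall w
    obtain ⟨g, b⟩ := w
    simp only [totDominatedBy, Set.mem_iUnion]
    rcases b with j | i
    · obtain ⟨g', hgg⟩ := exists_adj_of_connected G hc h2 g
      refine ⟨(g', Sum.inl 0), hall _ ((hmemC _).2 rfl), ?_⟩
      rw [Subsingleton.elim j 0]
      exact center_adj_center G hgg.symm
    · exact ⟨(g, Sum.inl 0), hall _ ((hmemC _).2 rfl), center_adj_leaf G g i⟩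
  have P1Z : ∀ h, (∀ c ∈ C, c ∈ h) → ∀ v, ¬ zLegal H ∅ h v := by
    intro h hall v hv
    obtain ⟨w, hw⟩ := hv
    exact hw.2 (Set.mem_union_right _ (hDall h hall w))
  have P1L : ∀ h, (∀ c ∈ C, c ∈ h) → ∀ v, ¬ llLegal H ∅ h v := by
    intro h hall v hv
    obtain ⟨w, hw⟩ := hv
    exact hw.2 (Set.mem_union_right _ (hTall h hall w))
  have P2Z : ∀ (h : List (V × (Fin 1 ⊕ Fin k))) c,
      h.length < k → c ∈ C → c ∉ h → zLegal H ∅ h c := by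
    intro h c hlen hcC hch
    obtain ⟨i, hi⟩ := exists_fresh hk0 h hlen
    have hc2 : c = (c.1, Sum.inl 0) := Prod.ext rfl ((hmemC c).1 hcC)
    refine ⟨(c.1, Sum.inr i), ?_, ?_⟩
    · show H.Adj c _
      rw [hc2]; exact center_adj_leaf G c.1 i
    · rw [Set.empty_union]
      exact notMem_dominatedBy_fresh G h c.1 i hi (by rw [← hc2]; exact hch)
  have P2L : ∀ (h : List (V × (Fin 1 ⊕ Fin k))) c,
      h.length < k → c ∈ C → c ∉ h → llLegal H ∅ h c := by
    intro h c hlen hcC hch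
    obtain ⟨i, hi⟩ := exists_fresh hk0 h hlen
    have hc2 : c = (c.1, Sum.inl 0) := Prod.ext rfl ((hmemC c).1 hcC)
    refine ⟨(c.1, Sum.inr i), ?_, ?_⟩
    · refine Set.mem_insert_iff.2 (Or.inr ?_)
      show H.Adj c _
      rw [hc2]; exact center_adj_leaf G c.1 i
    · rw [Set.empty_union]
      exact notMem_totDominatedBy_fresh G h c.1 i hi (by rw [← hc2]; exact hch)
  have P3Z : ∀ h : List (V × (Fin 1 ⊕ Fin k)), h.length < k →
      (∃ c ∈ C, c ∉ h) → ∃ v, v ∉ C ∧ zLegal H ∅ h v := by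
    intro h hlen hex
    obtain ⟨c, hcC, hch⟩ := hex
    obtain ⟨i, hi⟩ := exists_fresh hk0 h hlen
    have hc2 : c = (c.1, Sum.inl 0) := Prod.ext rfl ((hmemC c).1 hcC)
    obtain ⟨g', hgg⟩ := exists_adj_of_connected G hc h2 c.1
    refine ⟨(g', Sum.inr i), ?_, ⟨(c.1, Sum.inr i), ?_, ?_⟩⟩
    · intro hmem; simpa using (hmemC _).1 hmem
    · show H.Adj (g', Sum.inr i) (c.1, Sum.inr i)
      rw [SimpleGraph.boxProd_adj]; exact Or.inl ⟨hgg.symm, rfl⟩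
    · rw [Set.empty_union]
      exact notMem_dominatedBy_fresh G h c.1 i hi (by rw [← hc2]; exact hch)
  have P3L : ∀ h : List (V × (Fin 1 ⊕ Fin k)), h.length < k →
      (∃ c ∈ C, c ∉ h) → ∃ v, v ∉ C ∧ llLegal H ∅ h v := by
    intro h hlen hex
    obtain ⟨c, hcC, hch⟩ := hex
    obtain ⟨i, hi⟩ := exists_fresh hk0 h hlen
    have hc2 : c = (c.1, Sum.inl 0) := Prod.ext rfl ((hmemC c).1 hcC)
    refine ⟨(c.1, Sum.inr i), ?_, ⟨(c.1, Sum.inr i), Set.mem_insert _ _, ?_⟩⟩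
    · intro hmem; simpa using (hmemC _).1 hmem
    · rw [Set.empty_union]
      exact notMem_totDominatedBy_fresh G h c.1 i hi (by rw [← hc2]; exact hch)
  have key : ∀ legal : List (V × (Fin 1 ⊕ Fin k)) → (V × (Fin 1 ⊕ Fin k)) → Prop,
      (∀ h, (∀ c ∈ C, c ∈ h) → ∀ v, ¬ legal h v) →
      (∀ (h : List (V × (Fin 1 ⊕ Fin k))) c, h.length < k → c ∈ C → c ∉ h → legal h c) →
      (∀ h : List (V × (Fin 1 ⊕ Fin k)), h.length < k →
        (∃ c ∈ C, c ∉ h) → ∃ v, v ∉ C ∧ legal h v) →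
      gameVal legal true = 2 * n - 1 := by
    intro legal P1 P2 P3
    have hmem : canEnd legal (2 * n - 1) true [] := by
      apply abstract_up legal C k P1 P2
      · simp only [List.length_nil]; omega
      · simp only [List.toFinset_nil, Finset.sdiff_empty, hCcard, if_true]; omega
    have hlow : ∀ m ∈ {m | canEnd legal m true []}, 2 * n - 1 ≤ m := by
      intro m hm
      rcases le_or_gt k m with hkm | hmk
      · omega
      · have := abstract_low legal C k P2 P3 m true [] (by simpa using hmk) hm
        simp only [List.toFinset_nil, Finset.sdiff_empty, hCcard, if_true] at this
        omega
    exact le_antisymm (Nat.sInf_le hmem) (le_csInf ⟨_, hmem⟩ hlow)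
  constructor
  · exact key (zLegal H ∅) P1Z P2Z P3Z
  · exact key (llLegal H ∅) P1L P2L P3L
end
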